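/- Let B ⊆ ℝᴺ be the open ball of radius R > 0 centered at the origin, and let V : ℝ → ℝ be twice continuously differentiable with V″(s) > 0 for all s ∈ ℝ. Suppose φ₁, φ₂ : ℝᴺ → ℝ are twice continuously differentiable on an open set containing the closed ball of radius R and satisfy Δφᵢ(x) = V′(φᵢ(x)) for all x ∈ B, i = 1, 2. If the outward normal derivatives agree on the boundary sphere, i.e. Dφ₁(x)[x] = Dφ₂(x)[x] for all x with ‖x‖ = R (where Dφ(x) denotes the Fréchet derivative at x), then φ₁ = φ₂ on the closed ball of radius R. -/

import Mathlib

/-- The Laplacian of a function on Euclidean space: the sum of its second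
partial derivatives along the standard basis directions. -/
noncomputable def laplacian {n : ℕ} (f : EuclideanSpace ℝ (Fin n) → ℝ)
    (x : EuclideanSpace ℝ (Fin n)) : ℝ :=
  ∑ i : Fin n,
    fderiv ℝ (fderiv ℝ f) x (EuclideanSpace.single i 1) (EuclideanSpace.single i 1)

/-!
Let `w = φ₁ - φ₂`. Then `Δw = V'(φ₁) - V'(φ₂)` in the ball, which is positive wherever `w > 0`
because `V'` is strictly increasing, and the normal derivative of `w` vanishes on the sphere.
If `w` had a positive maximum `M`, then on the compact set `{w ≥ M/2}` we would have `Δw ≥ δ > 0`.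
For small `ε > 0` the function `ψ = w - ε‖x‖²` still attains its maximum in `{w ≥ M/2}`. That
maximum is not on the sphere, where `Dψ(x)[x] = -2εR² < 0` lets `ψ` increase inwards, and not
inside, where `Δψ ≥ δ - 2εN > 0` contradicts the second derivative test. So `φ₁ ≤ φ₂`, and
`φ₂ ≤ φ₁` by symmetry.
-/

open Filter Metric Set
open scoped Topology

theorem IsLocalMax.deriv_deriv_nonpos {f : ℝ → ℝ} {x₀ : ℝ} (h : IsLocalMax f x₀)
    (hc : ContinuousAt f x₀) : deriv (deriv f) x₀ ≤ 0 := by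
  by_contra! hpos
  have hmin : IsLocalMin f x₀ := isLocalMin_of_deriv_deriv_pos hpos h.deriv_eq_zero hc
  have hconst : f =ᶠ[𝓝 x₀] fun _ => f x₀ := by
    filter_upwards [h, hmin] with x hmax hmin using le_antisymm hmax hmin
  have hzero : deriv (deriv f) x₀ = 0 := by
    rw [hconst.deriv.deriv_eq]
    simp
  exact hpos.ne' hzero

theorem exists_pos_mul_lt_and_mul_lt (a c : ℝ) {b d : ℝ} (hb : 0 < b) (hd : 0 < d) :
    ∃ ε : ℝ, 0 < ε ∧ ε * a < b ∧ ε * c < d := by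
  have hεa : ∀ᶠ ε in 𝓝 (0 : ℝ), ε * a < b :=
    (continuous_mul_const a).continuousAt.eventually_lt continuousAt_const (by simpa using hb)
  have hεc : ∀ᶠ ε in 𝓝 (0 : ℝ), ε * c < d :=
    (continuous_mul_const c).continuousAt.eventually_lt continuousAt_const (by simpa using hd)
  exact (eventually_mem_nhdsWithin.and
    ((hεa.and hεc).filter_mono nhdsWithin_le_nhds)).exists (f := 𝓝[>] 0)

section

variable {E F : Type*} [NormedAddCommGroup E] [NormedSpace ℝ E] [NormedAddCommGroup F]
  [NormedSpace ℝ F]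

theorem ContDiffAt.eventually_differentiableAt {f : E → F} {x : E} (hf : ContDiffAt ℝ 2 f x) :
    ∀ᶠ y in 𝓝 x, DifferentiableAt ℝ f y :=
  (hf.eventually (by simp)).mono fun _ hy => hy.differentiableAt (by simp)

theorem ContDiffAt.differentiableAt_fderiv {f : E → F} {x : E} (hf : ContDiffAt ℝ 2 f x) :
    DifferentiableAt ℝ (fderiv ℝ f) x :=
  (hf.fderiv_right (m := 1) (by norm_num)).differentiableAt (by simp)

theorem IsLocalMax.fderiv_fderiv_apply_nonpos {f : E → ℝ} {x : E} (h : IsLocalMax f x)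
    (hf : ∀ᶠ y in 𝓝 x, DifferentiableAt ℝ f y) (hf' : DifferentiableAt ℝ (fderiv ℝ f) x)
    (v : E) : fderiv ℝ (fderiv ℝ f) x v v ≤ 0 := by
  set line : ℝ → E := fun t => x + t • v
  have hline : ∀ t, HasDerivAt line v t := fun t => by
    simpa [line] using ((hasDerivAt_id t).smul_const v).const_add x
  have hline0 : line 0 = x := by simp [line]
  rw [← hline0] at h hf hf' ⊢
  have hderiv : deriv (f ∘ line) =ᶠ[𝓝 0] fun t => fderiv ℝ f (line t) v := by
    filter_upwards [(hline 0).continuousAt.tendsto.eventually hf] with t ht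
    exact (ht.hasFDerivAt.comp_hasDerivAt t (hline t)).deriv
  have hderiv2 : HasDerivAt (fun t => fderiv ℝ f (line t) v)
      (fderiv ℝ (fderiv ℝ f) (line 0) v v) 0 :=
    ((ContinuousLinearMap.apply ℝ ℝ v).hasFDerivAt.comp _ hf'.hasFDerivAt).comp_hasDerivAt 0
      (hline 0)
  have hcont : ContinuousAt (f ∘ line) 0 :=
    hf.self_of_nhds.continuousAt.comp (hline 0).continuousAt
  simpa [hderiv.deriv_eq, hderiv2.deriv] using
    (h.comp_continuous (hline 0).continuousAt).deriv_deriv_nonpos hcont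

theorem IsLocalMaxOn.fderiv_apply_self_nonneg {f : E → ℝ} {s : Set E} {x : E}
    (h : IsLocalMaxOn f s x) (hs : StarConvex ℝ 0 s) (hx : x ∈ s)
    (hf : DifferentiableAt ℝ f x) : 0 ≤ fderiv ℝ f x x := by
  have hcone : -x ∈ posTangentConeAt s x :=
    mem_posTangentConeAt_of_segment_subset (by simpa [segment_symm] using hs.segment_subset hx)
  simpa using h.hasFDerivWithinAt_nonpos hf.hasFDerivAt.hasFDerivWithinAt hcone

end

section

variable {E : Type*} [NormedAddCommGroup E] [InnerProductSpace ℝ E]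

theorem mem_ball_of_isMaxOn_sub_mul_norm_sq {w : E → ℝ} {ε R : ℝ} {x : E} (hε : 0 < ε)
    (hR : 0 < R) (hmax : IsMaxOn (fun y => w y - ε * ‖y‖ ^ 2) (closedBall 0 R) x)
    (hx : x ∈ closedBall 0 R) (hw : DifferentiableAt ℝ w x)
    (hbdry : ‖x‖ = R → fderiv ℝ w x x ≤ 0) : x ∈ ball 0 R := by
  have hderiv : fderiv ℝ (fun y => w y - ε * ‖y‖ ^ 2) x x = fderiv ℝ w x x - 2 * ε * ‖x‖ ^ 2 := by
    rw [(hw.hasFDerivAt.fun_sub ((hasStrictFDerivAt_norm_sq x).hasFDerivAt.const_mul ε)).fderiv]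
    simp only [sub_apply, smul_apply, coe_innerSL_apply, inner_self_eq_norm_sq_to_K,
      Real.ringHom_apply, nsmul_eq_mul, Nat.cast_ofNat, smul_eq_mul]
    ring
  have hnonneg : 0 ≤ fderiv ℝ (fun y => w y - ε * ‖y‖ ^ 2) x x :=
    hmax.localize.fderiv_apply_self_nonneg
      ((convex_closedBall 0 R).starConvex (mem_closedBall_self hR.le)) hx
      (hw.sub ((differentiableAt_id.norm_sq ℝ).const_mul ε))
  rw [mem_ball_zero_iff]
  refine (mem_closedBall_zero_iff.1 hx).lt_of_ne fun hxR => ?_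
  have hnormal := hbdry hxR
  rw [hderiv, hxR] at hnonneg
  nlinarith [mul_pos hε (pow_pos hR 2)]

end

section

variable {N : ℕ}

theorem laplacian_sub {f g : EuclideanSpace ℝ (Fin N) → ℝ} {x : EuclideanSpace ℝ (Fin N)}
    (hf : ContDiffAt ℝ 2 f x) (hg : ContDiffAt ℝ 2 g x) :
    laplacian (fun y => f y - g y) x = laplacian f x - laplacian g x := by
  have hderiv : fderiv ℝ (fun y => f y - g y) =ᶠ[𝓝 x] fun y => fderiv ℝ f y - fderiv ℝ g y := by
    filter_upwards [hf.eventually_differentiableAt, hg.eventually_differentiableAt]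
      with y hfy hgy using fderiv_fun_sub hfy hgy
  simp only [laplacian, hderiv.fderiv_eq,
    fderiv_fun_sub hf.differentiableAt_fderiv hg.differentiableAt_fderiv,
    sub_apply, Finset.sum_sub_distrib]

theorem laplacian_const_mul (c : ℝ) (f : EuclideanSpace ℝ (Fin N) → ℝ)
    (x : EuclideanSpace ℝ (Fin N)) :
    laplacian (fun y => c * f y) x = c * laplacian f x := by
  have h : (fun y => c * f y) = c • f := rfl
  rw [laplacian, laplacian, h, fderiv_const_smul_field,
    fderiv_const_smul_field (𝕜 := ℝ) (f := fderiv ℝ f) c]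
  simp [Finset.mul_sum]

theorem laplacian_norm_sq (x : EuclideanSpace ℝ (Fin N)) :
    laplacian (fun y => ‖y‖ ^ 2) x = 2 * N := by
  have hderiv : fderiv ℝ (fun y : EuclideanSpace ℝ (Fin N) => ‖y‖ ^ 2) =
      fun y => (2 : ℝ) • innerSL ℝ y := by
    ext y : 1
    rw [fderiv_norm_sq_apply, ← Nat.cast_smul_eq_nsmul ℝ]
    rfl
  -- `innerSL ℝ` is typed as conjugate-linear, so the linear-map lemmas only apply up to defeq.
  have h : ∀ v w, fderiv ℝ (fderiv ℝ fun y : EuclideanSpace ℝ (Fin N) => ‖y‖ ^ 2) x v w =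
      2 * inner ℝ v w := by
    intro v w
    rw [hderiv, HasFDerivAt.fderiv (f := fun y => (2 : ℝ) • innerSL ℝ y)
      (f' := (2 : ℝ) • innerSL ℝ) ((innerSL ℝ).hasFDerivAt.const_smul (2 : ℝ))]
    rfl
  simp [laplacian, h, mul_comm]

theorem IsLocalMax.laplacian_nonpos {f : EuclideanSpace ℝ (Fin N) → ℝ}
    {x : EuclideanSpace ℝ (Fin N)} (h : IsLocalMax f x) (hf : ContDiffAt ℝ 2 f x) :
    laplacian f x ≤ 0 :=
  Finset.sum_nonpos fun _ _ =>
    h.fderiv_fderiv_apply_nonpos hf.eventually_differentiableAt hf.differentiableAt_fderiv _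

theorem IsLocalMax.laplacian_le_of_sub_mul_norm_sq {w : EuclideanSpace ℝ (Fin N) → ℝ} {ε : ℝ}
    {x : EuclideanSpace ℝ (Fin N)} (h : IsLocalMax (fun y => w y - ε * ‖y‖ ^ 2) x)
    (hw : ContDiffAt ℝ 2 w x) : laplacian w x ≤ 2 * ε * N := by
  have hnorm_sq : ContDiffAt ℝ 2 (fun y : EuclideanSpace ℝ (Fin N) => ε * ‖y‖ ^ 2) x :=
    contDiffAt_const.mul (contDiff_norm_sq ℝ).contDiffAt
  have hnonpos := h.laplacian_nonpos (hw.sub hnorm_sq)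
  rw [laplacian_sub hw hnorm_sq, laplacian_const_mul, laplacian_norm_sq] at hnonpos
  linarith

theorem nonpos_of_le_laplacian_of_fderiv_apply_self_nonpos {R : ℝ} (hR : 0 < R)
    {w c : EuclideanSpace ℝ (Fin N) → ℝ} (hw : ∀ x ∈ closedBall 0 R, ContDiffAt ℝ 2 w x)
    (hc : ContinuousOn c (closedBall 0 R)) (hc_pos : ∀ x ∈ closedBall 0 R, 0 < w x → 0 < c x)
    (hlap : ∀ x ∈ ball 0 R, c x ≤ laplacian w x)
    (hbdry : ∀ x, ‖x‖ = R → fderiv ℝ w x x ≤ 0) :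
    ∀ x ∈ closedBall 0 R, w x ≤ 0 := by
  intro y hy
  by_contra! hwy
  have hw_cont : ContinuousOn w (closedBall 0 R) := fun x hx =>
    (hw x hx).continuousAt.continuousWithinAt
  obtain ⟨x₀, hx₀, hmax₀⟩ := (isCompact_closedBall 0 R).exists_isMaxOn ⟨y, hy⟩ hw_cont
  set M := w x₀
  have hM : 0 < M := hwy.trans_le (hmax₀ hy)
  set K := closedBall 0 R ∩ w ⁻¹' Ici (M / 2)
  have hK : IsCompact K := (isCompact_closedBall 0 R).of_isClosed_subset
    (hw_cont.preimage_isClosed_of_isClosed isClosed_closedBall isClosed_Ici) inter_subset_left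
  obtain ⟨δ, hδ, hcδ⟩ := hK.exists_forall_le' (hc.mono inter_subset_left)
    fun x hx => hc_pos x hx.1 (by linarith [show M / 2 ≤ w x from hx.2])
  obtain ⟨ε, hε, hεR, hεN⟩ := exists_pos_mul_lt_and_mul_lt (R ^ 2) (2 * N) (half_pos hM) hδ
  have hψ_cont : ContinuousOn (fun y => w y - ε * ‖y‖ ^ 2) (closedBall 0 R) :=
    hw_cont.sub (by fun_prop)
  obtain ⟨x₁, hx₁, hmax₁⟩ := (isCompact_closedBall 0 R).exists_isMaxOn ⟨y, hy⟩ hψ_cont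
  have hx₁K : x₁ ∈ K := by
    refine ⟨hx₁, ?_⟩
    have hx₀R : ‖x₀‖ ≤ R := mem_closedBall_zero_iff.1 hx₀
    calc M / 2 ≤ M - ε * R ^ 2 := by linarith
      _ ≤ M - ε * ‖x₀‖ ^ 2 := by gcongr
      _ ≤ w x₁ - ε * ‖x₁‖ ^ 2 := hmax₁ hx₀
      _ ≤ w x₁ := sub_le_self _ (by positivity)
  have hx₁_ball : x₁ ∈ ball 0 R := mem_ball_of_isMaxOn_sub_mul_norm_sq hε hR hmax₁ hx₁
    ((hw x₁ hx₁).differentiableAt (by simp)) (hbdry x₁)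
  have hlocal := hmax₁.isLocalMax (closedBall_mem_nhds_of_mem hx₁_ball)
  linarith [hlap x₁ hx₁_ball, hcδ x₁ hx₁K, hlocal.laplacian_le_of_sub_mul_norm_sq (hw x₁ hx₁)]

theorem le_of_le_laplacian_of_laplacian_le {R : ℝ} (hR : 0 < R) {f : ℝ → ℝ}
    (hf : Continuous f) (hf_mono : StrictMono f) {φ₁ φ₂ : EuclideanSpace ℝ (Fin N) → ℝ}
    (hφ₁ : ∀ x ∈ closedBall 0 R, ContDiffAt ℝ 2 φ₁ x)
    (hφ₂ : ∀ x ∈ closedBall 0 R, ContDiffAt ℝ 2 φ₂ x)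
    (hsub : ∀ x ∈ ball 0 R, f (φ₁ x) ≤ laplacian φ₁ x)
    (hsuper : ∀ x ∈ ball 0 R, laplacian φ₂ x ≤ f (φ₂ x))
    (hbdry : ∀ x, ‖x‖ = R → fderiv ℝ φ₁ x x ≤ fderiv ℝ φ₂ x x) :
    ∀ x ∈ closedBall 0 R, φ₁ x ≤ φ₂ x := by
  have hmem : ∀ x, ‖x‖ = R → x ∈ closedBall (0 : EuclideanSpace ℝ (Fin N)) R := fun x hx =>
    mem_closedBall_zero_iff.2 hx.le
  have key := nonpos_of_le_laplacian_of_fderiv_apply_self_nonpos hR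
    (w := fun x => φ₁ x - φ₂ x) (c := fun x => f (φ₁ x) - f (φ₂ x))
    (fun x hx => (hφ₁ x hx).sub (hφ₂ x hx))
    ((hf.comp_continuousOn fun x hx => (hφ₁ x hx).continuousAt.continuousWithinAt).sub
      (hf.comp_continuousOn fun x hx => (hφ₂ x hx).continuousAt.continuousWithinAt))
    (fun x _ hx => sub_pos.2 (hf_mono (sub_pos.1 hx)))
    (fun x hx => by
      have hx' := ball_subset_closedBall hx
      rw [laplacian_sub (hφ₁ x hx') (hφ₂ x hx')]
      linarith [hsub x hx, hsuper x hx])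
    (fun x hx => by
      rw [fderiv_fun_sub ((hφ₁ x (hmem x hx)).differentiableAt (by simp))
        ((hφ₂ x (hmem x hx)).differentiableAt (by simp))]
      simpa using hbdry x hx)
  exact fun x hx => sub_nonpos.1 (key x hx)

end

theorem neumann_uniqueness_strictly_convex_potential_general
    {N : ℕ} (R : ℝ) (hR : 0 < R)
    (V : ℝ → ℝ) (hV'' : ∀ s : ℝ, 0 < deriv (deriv V) s)
    (U : Set (EuclideanSpace ℝ (Fin N))) (hU : IsOpen U)
    (hBU : Metric.closedBall (0 : EuclideanSpace ℝ (Fin N)) R ⊆ U)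
    (φ₁ φ₂ : EuclideanSpace ℝ (Fin N) → ℝ)
    (hd₁ : ContDiffOn ℝ 2 φ₁ U) (hd₂ : ContDiffOn ℝ 2 φ₂ U)
    (heq₁ : ∀ x ∈ Metric.ball (0 : EuclideanSpace ℝ (Fin N)) R,
      laplacian φ₁ x = deriv V (φ₁ x))
    (heq₂ : ∀ x ∈ Metric.ball (0 : EuclideanSpace ℝ (Fin N)) R,
      laplacian φ₂ x = deriv V (φ₂ x))
    (hbc : ∀ x : EuclideanSpace ℝ (Fin N), ‖x‖ = R →
      fderiv ℝ φ₁ x x = fderiv ℝ φ₂ x x) :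
    ∀ x ∈ Metric.closedBall (0 : EuclideanSpace ℝ (Fin N)) R, φ₁ x = φ₂ x := by
  have hV' : Continuous (deriv V) :=
    Differentiable.continuous fun s => differentiableAt_of_deriv_ne_zero (hV'' s).ne'
  have hV'_mono : StrictMono (deriv V) := strictMono_of_deriv_pos hV''
  have hφ₁ : ∀ x ∈ closedBall 0 R, ContDiffAt ℝ 2 φ₁ x := fun x hx =>
    hd₁.contDiffAt (hU.mem_nhds (hBU hx))
  have hφ₂ : ∀ x ∈ closedBall 0 R, ContDiffAt ℝ 2 φ₂ x := fun x hx =>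
    hd₂.contDiffAt (hU.mem_nhds (hBU hx))
  intro x hx
  exact le_antisymm
    (le_of_le_laplacian_of_laplacian_le hR hV' hV'_mono hφ₁ hφ₂ (fun y hy => (heq₁ y hy).ge)
      (fun y hy => (heq₂ y hy).le) (fun y hy => (hbc y hy).le) x hx)
    (le_of_le_laplacian_of_laplacian_le hR hV' hV'_mono hφ₂ hφ₁ (fun y hy => (heq₂ y hy).ge)
      (fun y hy => (heq₁ y hy).le) (fun y hy => (hbc y hy).ge) x hx)

/-- Neumann uniqueness for the scalar field toy model: two solutions of
`Δφ = V'(φ)` on a ball, for a potential with `V'' > 0`, whose outward normal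
derivatives agree on the boundary sphere, agree on the closed ball. -/
theorem neumann_uniqueness_strictly_convex_potential
    {N : ℕ} (R : ℝ) (hR : 0 < R)
    (V : ℝ → ℝ) (hV : ContDiff ℝ 2 V) (hV'' : ∀ s : ℝ, 0 < deriv (deriv V) s)
    (U : Set (EuclideanSpace ℝ (Fin N))) (hU : IsOpen U)
    (hBU : Metric.closedBall (0 : EuclideanSpace ℝ (Fin N)) R ⊆ U)
    (φ₁ φ₂ : EuclideanSpace ℝ (Fin N) → ℝ)
    (hd₁ : ContDiffOn ℝ 2 φ₁ U) (hd₂ : ContDiffOn ℝ 2 φ₂ U)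
    (heq₁ : ∀ x ∈ Metric.ball (0 : EuclideanSpace ℝ (Fin N)) R,
      laplacian φ₁ x = deriv V (φ₁ x))
    (heq₂ : ∀ x ∈ Metric.ball (0 : EuclideanSpace ℝ (Fin N)) R,
      laplacian φ₂ x = deriv V (φ₂ x))
    (hbc : ∀ x : EuclideanSpace ℝ (Fin N), ‖x‖ = R →
      fderiv ℝ φ₁ x x = fderiv ℝ φ₂ x x) :
    ∀ x ∈ Metric.closedBall (0 : EuclideanSpace ℝ (Fin N)) R, φ₁ x = φ₂ x :=
  neumann_uniqueness_strictly_convex_potential_general R hR V hV'' U hU hBU φ₁ φ₂ hd₁ hd₂ heq₁ heq₂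
    hbc
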